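/- Let G be an NFA with set of secret states Q^S ⊆ Q, let ∼o be an opaque observation equivalence on G w.r.t. Q^S with quotient automaton G̃ = G/∼o and quotient secret states Q̃^S. Then det(G) ≈ det(G̃) and det_d(G) ≈ det_d(G̃), where ≈ denotes bisimilarity of deterministic automata and the desired observer det_d(G̃) is taken by deleting the states X̃ of det(G̃) with X̃ ⊆ Q̃^S. -/
import Mathlib


set_option autoImplicit false

/-! ### Nondeterministic finite automata with unobservable event τ (label `none`) -/

structure NFAt (σ : Type*) (Q : Type*) where
  trans : Q → Option σ → Q → Prop
  init : Set Q

namespace NFAt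

variable {σ : Type*} {Q : Type*}

/-- `G.obsReach x s y`: there is a path from `x` to `y` whose label sequence,
after erasing all τ's (`none` labels), equals `s`. -/
inductive obsReach (G : NFAt σ Q) : Q → List σ → Q → Prop
  | refl (x : Q) : obsReach G x [] x
  | tau {x y z : Q} {s : List σ} :
      G.trans x none y → obsReach G y s z → obsReach G x s z
  | obs {x y z : Q} {a : σ} {s : List σ} :
      G.trans x (some a) y → obsReach G y s z → obsReach G x (a :: s) z

/-- unobservable reach of a set of states -/
def UR (G : NFAt σ Q) (B : Set Q) : Set Q := {y | ∃ x ∈ B, G.obsReach x [] y}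

/-- one observer (subset-construction) step -/
def obsStep (G : NFAt σ Q) (X : Set Q) (a : σ) : Set Q :=
  {y | ∃ x ∈ X, ∃ z, G.trans x (some a) z ∧ G.obsReach z [] y}

/-- initial state of the observer `det(G)` -/
def detInit (G : NFAt σ Q) : Set Q := G.UR G.init

/-- reach in the observer `det(G)` from a given observer state -/
inductive detReach (G : NFAt σ Q) : Set Q → List σ → Set Q → Prop
  | nil (X : Set Q) : detReach G X [] X
  | cons {X Y : Set Q} {a : σ} {s : List σ} :
      (G.obsStep X a).Nonempty → detReach G (G.obsStep X a) s Y →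
      detReach G X (a :: s) Y

/-- `det(G) →^s X` -/
def detReach₀ (G : NFAt σ Q) (s : List σ) (X : Set Q) : Prop :=
  G.detReach G.detInit s X

/-- reach in the desired observer `det_d(G)` (observer states contained in the
secret set are deleted) -/
inductive detdReach (G : NFAt σ Q) (QS : Set Q) : Set Q → List σ → Set Q → Prop
  | nil {X : Set Q} : ¬ X ⊆ QS → detdReach G QS X [] X
  | cons {X Y : Set Q} {a : σ} {s : List σ} :
      ¬ X ⊆ QS → (G.obsStep X a).Nonempty →
      detdReach G QS (G.obsStep X a) s Y → detdReach G QS X (a :: s) Y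

/-- `det_d(G) →^s X` -/
def detdReach₀ (G : NFAt σ Q) (QS : Set Q) (s : List σ) (X : Set Q) : Prop :=
  G.detdReach QS G.detInit s X

/-- current-state opacity w.r.t. the set of secret states `QS` -/
def CSO (G : NFAt σ Q) (QS : Set Q) : Prop :=
  ∀ (s : List σ) (x0 x : Q), x0 ∈ G.init → G.obsReach x0 s x → x ∈ QS →
    ∃ y0 y, y0 ∈ G.init ∧ G.obsReach y0 s y ∧ y ∉ QS

/-- language of `G` -/
def lang (G : NFAt σ Q) : Set (List σ) :=
  {s | ∃ x0 ∈ G.init, ∃ x, G.obsReach x0 s x}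

end NFAt

/-! ### Opaque observation equivalence and quotient automata -/

/-- `r` is an opaque observation equivalence on `G` w.r.t. `QS`. -/
def OpaqueObsEquiv {σ Q : Type*} (G : NFAt σ Q) (QS : Set Q) (r : Q → Q → Prop) : Prop :=
  Equivalence r ∧
  (∀ x1 x2, r x1 x2 → ∀ (s : List σ) (y1 : Q), G.obsReach x1 s y1 →
    ∃ y2, G.obsReach x2 s y2 ∧ r y1 y2) ∧
  (∀ x1 x2, r x1 x2 → (x1 ∈ QS ↔ x2 ∈ QS))

/-- quotient automaton `G/∼` -/
def quotNFA {σ Q : Type*} (G : NFAt σ Q) (r : Setoid Q) : NFAt σ (Quotient r) where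
  trans c e c' := ∃ x y, c = Quotient.mk r x ∧ c' = Quotient.mk r y ∧ G.trans x e y
  init := {c | ∃ x ∈ G.init, c = Quotient.mk r x}

/-- quotient secret states -/
def quotSecret {Q : Type*} (r : Setoid Q) (QS : Set Q) : Set (Quotient r) :=
  {c | ∃ x ∈ QS, c = Quotient.mk r x}

/-! ### Deterministic automata (as transition structures), bisimilarity, quotients -/

structure DA (σ : Type*) (S : Type*) where
  step : S → σ → S → Prop
  init : S

/-- paths in an arbitrary labelled transition structure -/
inductive Steps {S E : Type*} (step : S → E → S → Prop) : S → List E → S → Prop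
  | nil (p : S) : Steps step p [] p
  | cons {p q r : S} {e : E} {s : List E} :
      step p e q → Steps step q s r → Steps step p (e :: s) r

/-- bisimilarity of two deterministic automata -/
def Bisimilar {σ S1 S2 : Type*} (A : DA σ S1) (B : DA σ S2) : Prop :=
  ∃ R : S1 → S2 → Prop, R A.init B.init ∧
    ∀ p q, R p q →
      (∀ a p', A.step p a p' → ∃ q', B.step q a q' ∧ R p' q') ∧
      (∀ a q', B.step q a q' → ∃ p', A.step p a p' ∧ R p' q')

/-- the observer `det(G)` as a deterministic automaton -/
def observerDA {σ Q : Type*} (G : NFAt σ Q) : DA σ (Set Q) where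
  step X a Y := Y = G.obsStep X a ∧ Y.Nonempty
  init := G.detInit

/-- the desired observer `det_d(G)` as a deterministic automaton -/
def desiredDA {σ Q : Type*} (G : NFAt σ Q) (QS : Set Q) : DA σ (Set Q) where
  step X a Y := Y = G.obsStep X a ∧ Y.Nonempty ∧ ¬ X ⊆ QS ∧ ¬ Y ⊆ QS
  init := G.detInit

/-- opaque bisimulation on a deterministic automaton with secrecy predicate `sec` -/
def OpaqueBisimDA {σ S : Type*} (A : DA σ S) (sec : S → Prop) (r : S → S → Prop) : Prop :=
  Equivalence r ∧
  (∀ X1 X2, r X1 X2 → ∀ (s : List σ) (Y1 : S), Steps A.step X1 s Y1 →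
    ∃ Y2, Steps A.step X2 s Y2 ∧ r Y1 Y2) ∧
  (∀ X1 X2, r X1 X2 → (sec X1 ↔ sec X2))

/-- plain bisimulation (equivalence) on a deterministic automaton -/
def BisimEquivDA {σ S : Type*} (A : DA σ S) (r : S → S → Prop) : Prop :=
  Equivalence r ∧
  (∀ X1 X2, r X1 X2 → ∀ (s : List σ) (Y1 : S), Steps A.step X1 s Y1 →
    ∃ Y2, Steps A.step X2 s Y2 ∧ r Y1 Y2)

/-- quotient of a deterministic automaton by an equivalence -/
def quotDA {σ S : Type*} (A : DA σ S) (r : Setoid S) : DA σ (Quotient r) where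
  step c a c' := ∃ X Y, c = Quotient.mk r X ∧ c' = Quotient.mk r Y ∧ A.step X a Y
  init := Quotient.mk r A.init

/-- secrecy predicate on equivalence classes -/
def quotSec {S : Type*} (r : Setoid S) (sec : S → Prop) : Quotient r → Prop :=
  fun c => ∃ X, c = Quotient.mk r X ∧ sec X

/-- delete the secret states from a deterministic automaton -/
def delSecret {σ S : Type*} (A : DA σ S) (sec : S → Prop) : DA σ S where
  step X a Y := A.step X a Y ∧ ¬ sec X ∧ ¬ sec Y
  init := A.init

/-! ### Automata with alphabets and synchronous composition -/

structure LDA (σ : Type*) (S : Type*) where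
  alph : Set σ
  step : S → σ → S → Prop
  init : S

namespace LDA

variable {σ S S1 S2 : Type*}

/-- synchronous composition of two deterministic automata with alphabets -/
def sync (A : LDA σ S1) (B : LDA σ S2) : LDA σ (S1 × S2) where
  alph := A.alph ∪ B.alph
  step p a q :=
    (a ∈ A.alph ∧ a ∈ B.alph ∧ A.step p.1 a q.1 ∧ B.step p.2 a q.2) ∨
    (a ∈ A.alph ∧ a ∉ B.alph ∧ A.step p.1 a q.1 ∧ q.2 = p.2) ∨
    (a ∉ A.alph ∧ a ∈ B.alph ∧ B.step p.2 a q.2 ∧ q.1 = p.1)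
  init := (A.init, B.init)

/-- reach from the initial state -/
def reach₀ (A : LDA σ S) (s : List σ) (p : S) : Prop :=
  Steps A.step A.init s p

end LDA

/-- the observer `det(G)` as an automaton with alphabet -/
def observerLDA {σ Q : Type*} (G : NFAt σ Q) (Al : Set σ) : LDA σ (Set Q) where
  alph := Al
  step X a Y := a ∈ Al ∧ Y = G.obsStep X a ∧ Y.Nonempty
  init := G.detInit

/-- the desired observer `det_d(G)` as an automaton with alphabet -/
def desiredLDA {σ Q : Type*} (G : NFAt σ Q) (Al : Set σ) (QS : Set Q) : LDA σ (Set Q) where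
  alph := Al
  step X a Y := a ∈ Al ∧ Y = G.obsStep X a ∧ Y.Nonempty ∧ ¬ X ⊆ QS ∧ ¬ Y ⊆ QS
  init := G.detInit

/-- synchronous composition of two NFAs with alphabets `A1`, `A2` -/
def syncNFA {σ Q1 Q2 : Type*} (G1 : NFAt σ Q1) (G2 : NFAt σ Q2) (A1 A2 : Set σ) :
    NFAt σ (Q1 × Q2) where
  trans p e q :=
    (∃ a, e = some a ∧ a ∈ A1 ∧ a ∈ A2 ∧ G1.trans p.1 e q.1 ∧ G2.trans p.2 e q.2) ∨
    ((e = none ∨ ∃ a, e = some a ∧ a ∈ A1 ∧ a ∉ A2) ∧ G1.trans p.1 e q.1 ∧ q.2 = p.2) ∨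
    ((e = none ∨ ∃ a, e = some a ∧ a ∈ A2 ∧ a ∉ A1) ∧ G2.trans p.2 e q.2 ∧ q.1 = p.1)
  init := {p | p.1 ∈ G1.init ∧ p.2 ∈ G2.init}

-- natural projection on strings, erasing events outside `A`
open Classical in
noncomputable def projL {σ : Type*} (A : Set σ) : List σ → List σ
  | [] => []
  | a :: s => if a ∈ A then a :: projL A s else projL A s

/-- n-ary synchronous composition of NFAs over the same state type -/
def syncNFAN {σ Q : Type*} {m : ℕ} (G : Fin m → NFAt σ Q) (A : Fin m → Set σ) :
    NFAt σ (Fin m → Q) where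
  trans x e y :=
    (e = none ∧ ∃ i, (G i).trans (x i) none (y i) ∧ ∀ j, j ≠ i → y j = x j) ∨
    (∃ a, e = some a ∧ (∃ i, a ∈ A i) ∧
      (∀ i, a ∈ A i → (G i).trans (x i) (some a) (y i)) ∧
      (∀ i, a ∉ A i → y i = x i))
  init := {x | ∀ i, x i ∈ (G i).init}

/-- n-ary synchronous composition of automata with alphabets -/
def syncLDAN {E : Type*} {m : ℕ} {S : Fin m → Type*} (A : ∀ i, LDA E (S i)) :
    LDA E (∀ i, S i) where
  alph := {e | ∃ i, e ∈ (A i).alph}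
  step x e y := (∃ i, e ∈ (A i).alph) ∧
    (∀ i, e ∈ (A i).alph → (A i).step (x i) e (y i)) ∧
    (∀ i, e ∉ (A i).alph → y i = x i)
  init := fun i => (A i).init

/-! ### Three-player observers (TPOs) -/

/-- labels of TPO transitions: an event of Σ, the empty insertion ε,
or an erasure `σ→ε` -/
inductive TPOLabel (σ : Type*)
  | ev : σ → TPOLabel σ
  | eps : TPOLabel σ
  | er : σ → TPOLabel σ

/-- states of a TPO: `Y`, `Z` (with event component) and `W`
(with action component: `Sum.inl e` = event `e`, `Sum.inr e` = erasure `e→ε`) -/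
inductive TPOState (σ : Type*) (Sd : Type*) (Sf : Type*)
  | Y : Sd → Sf → TPOState σ Sd Sf
  | Z : Sd → Sf → σ → TPOState σ Sd Sf
  | W : Sd → Sf → σ ⊕ σ → TPOState σ Sd Sf

namespace TPOState

variable {σ Sd Sf : Type*}

def isY : TPOState σ Sd Sf → Prop
  | .Y _ _ => True
  | _ => False

def isZ : TPOState σ Sd Sf → Prop
  | .Z _ _ _ => True
  | _ => False

def isW : TPOState σ Sd Sf → Prop
  | .W _ _ _ => True
  | _ => False

end TPOState

/-- the transition relation of the largest TPO w.r.t. a pair of deterministic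
transition structures `(Dd, Df)` (desired observer and observer) -/
inductive TPOTrans {σ Sd Sf : Type*} (Dd : Sd → σ → Sd → Prop) (Df : Sf → σ → Sf → Prop) :
    TPOState σ Sd Sf → TPOLabel σ → TPOState σ Sd Sf → Prop
  | yz {xd xf e xf'} : Df xf e xf' →
      TPOTrans Dd Df (.Y xd xf) (.ev e) (.Z xd xf e)
  | zz {xd xf e θ xd'} : Dd xd θ xd' →
      TPOTrans Dd Df (.Z xd xf e) (.ev θ) (.Z xd' xf e)
  | zw1 {xd xf e xd' xf'} : Dd xd e xd' → Df xf e xf' →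
      TPOTrans Dd Df (.Z xd xf e) .eps (.W xd xf (Sum.inl e))
  | zw2 {xd xf e xf'} : Df xf e xf' →
      TPOTrans Dd Df (.Z xd xf e) (.er e) (.W xd xf (Sum.inr e))
  | wy1 {xd xf e xd' xf'} : Dd xd e xd' → Df xf e xf' →
      TPOTrans Dd Df (.W xd xf (Sum.inl e)) (.ev e) (.Y xd' xf')
  | wy2 {xd xf e xf'} : Df xf e xf' →
      TPOTrans Dd Df (.W xd xf (Sum.inr e)) (.ev e) (.Y xd xf')

/-! ### Transformed automata of TPOs, tagged events, renaming -/

/-- tagged events of the transformed automaton of a TPO: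
`yz α` (untagged system event), `ins α e_o` (= α_{e_o}), `epsIns e_o` (= ε_{e_o}),
`erase e_o` (= (e_o→ε)_{e_o}), `wy α e_o` (= α_{e_o,w}), `wyEr α e_o` (= α_{e_o→ε,w}) -/
inductive TEv (σ : Type*)
  | yz : σ → TEv σ
  | ins : σ → σ → TEv σ
  | epsIns : σ → TEv σ
  | erase : σ → TEv σ
  | wy : σ → σ → TEv σ
  | wyEr : σ → σ → TEv σ

/-- the renaming ρ, mapping tagged events back to TPO labels -/
def TEv.rho {σ : Type*} : TEv σ → TPOLabel σ
  | .yz a => .ev a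
  | .ins a _ => .ev a
  | .epsIns _ => .eps
  | .erase e => .er e
  | .wy a _ => .ev a
  | .wyEr a _ => .ev a

/-- letterwise renaming of strings -/
def rhoStr {σ : Type*} (s : List (TEv σ)) : List (TPOLabel σ) := s.map TEv.rho

/-- transitions of the transformed automaton of the largest TPO w.r.t. `(Dd, Df)`,
with self-loops at `Y`-states for the events in `ext` (other components' private
events) -/
inductive TATrans {σ Sd Sf : Type*} (Dd : Sd → σ → Sd → Prop) (Df : Sf → σ → Sf → Prop)
    (ext : Set σ) : TPOState σ Sd Sf → TEv σ → TPOState σ Sd Sf → Prop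
  | yz {xd xf e q} : TPOTrans Dd Df (.Y xd xf) (.ev e) q →
      TATrans Dd Df ext (.Y xd xf) (.yz e) q
  | zz {xd xf e θ q} : TPOTrans Dd Df (.Z xd xf e) (.ev θ) q →
      TATrans Dd Df ext (.Z xd xf e) (.ins θ e) q
  | zw1 {xd xf e q} : TPOTrans Dd Df (.Z xd xf e) .eps q →
      TATrans Dd Df ext (.Z xd xf e) (.epsIns e) q
  | zw2 {xd xf e q} : TPOTrans Dd Df (.Z xd xf e) (.er e) q →
      TATrans Dd Df ext (.Z xd xf e) (.erase e) q
  | wy1 {xd xf e a q} : TPOTrans Dd Df (.W xd xf (Sum.inl e)) (.ev a) q →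
      TATrans Dd Df ext (.W xd xf (Sum.inl e)) (.wy a e) q
  | wy2 {xd xf e a q} : TPOTrans Dd Df (.W xd xf (Sum.inr e)) (.ev a) q →
      TATrans Dd Df ext (.W xd xf (Sum.inr e)) (.wyEr a e) q
  | loop {xd xf a} : a ∈ ext → TATrans Dd Df ext (.Y xd xf) (.yz a) (.Y xd xf)

/-- alphabet of the transformed automaton of a component with alphabet `A`,
where `B` is the union of the other components' alphabets -/
def transAlph {σ : Type*} (A B : Set σ) : Set (TEv σ) :=
  fun e => match e with
  | .yz a => a ∈ A ∨ a ∈ B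
  | .ins a eo => (a ∈ A ∧ eo ∈ A) ∨ (a ∈ A ∧ a ∈ B ∧ eo ∈ B ∧ eo ∉ A)
  | .epsIns eo => eo ∈ A
  | .erase eo => eo ∈ A
  | .wy a eo => (a ∈ A ∧ eo ∈ A) ∨ (a ∈ A ∧ a ∈ B ∧ eo ∈ B ∧ eo ∉ A)
  | .wyEr a eo => (a ∈ A ∧ eo ∈ A) ∨ (a ∈ A ∧ a ∈ B ∧ eo ∈ B ∧ eo ∉ A)

/-- the transformed automaton `G^T` of the largest TPO w.r.t. `(Dd, Df)`,
with initial components `d0`, `f0`, component alphabet `A` and other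
components' alphabet `B` (marked states are the `Y`-states) -/
def transLDA {σ Sd Sf : Type*} (Dd : Sd → σ → Sd → Prop) (Df : Sf → σ → Sf → Prop)
    (d0 : Sd) (f0 : Sf) (A B : Set σ) : LDA (TEv σ) (TPOState σ Sd Sf) where
  alph := transAlph A B
  step := TATrans Dd Df (B \ A)
  init := .Y d0 f0

/-- the uncontrollable events of a transformed automaton: those labelling
transitions out of `Y`-states and out of `W`-states -/
def uncontrollableEv {σ : Type*} : Set (TEv σ) :=
  {e | (∃ a, e = TEv.yz a) ∨ (∃ a eo, e = TEv.wy a eo) ∨ (∃ a eo, e = TEv.wyEr a eo)}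

/-! ### The edit constraint specification and the constrained TPO -/

/-- insertion-decision events over the alphabet `A` -/
def isInsEv {σ : Type*} (A : Set σ) : TEv σ → Prop
  | .ins a eo => a ∈ A ∧ eo ∈ A
  | .epsIns eo => eo ∈ A
  | _ => False

/-- erasure-decision events over the alphabet `A` -/
def isErEv {σ : Type*} (A : Set σ) : TEv σ → Prop
  | .erase eo => eo ∈ A
  | _ => False

/-- the specification automaton `K` of the edit constraint Φ forbidding `n+1`
consecutive erasures: states `x_0, …, x_{n+1}` (represented by `ℕ`), marked
states `x_0, …, x_n`, erasures count up, insertions reset, `x_{n+1}` is dead -/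
def specK {σ : Type*} (A : Set σ) (n : ℕ) : LDA (TEv σ) ℕ where
  alph := {e | isInsEv A e ∨ isErEv A e}
  step i e j := i ≤ n ∧ ((isErEv A e ∧ j = i + 1) ∨ (isInsEv A e ∧ j = 0))
  init := 0

/-- transitions of the largest TPO with the edit constraint Φ imposed: states
are TPO states paired with the number of consecutive erasures performed so far;
no `nB+1` consecutive erasure decisions may occur without an intervening
insertion decision -/
inductive CTrans {σ Sd Sf : Type*} (Dd : Sd → σ → Sd → Prop) (Df : Sf → σ → Sf → Prop)
    (nB : ℕ) : TPOState σ Sd Sf × ℕ → TPOLabel σ → TPOState σ Sd Sf × ℕ → Prop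
  | yz {xd xf e q k} : TPOTrans Dd Df (.Y xd xf) (.ev e) q →
      CTrans Dd Df nB (.Y xd xf, k) (.ev e) (q, k)
  | zz {xd xf e θ q k} : TPOTrans Dd Df (.Z xd xf e) (.ev θ) q →
      CTrans Dd Df nB (.Z xd xf e, k) (.ev θ) (q, 0)
  | zw1 {xd xf e q k} : TPOTrans Dd Df (.Z xd xf e) .eps q →
      CTrans Dd Df nB (.Z xd xf e, k) .eps (q, 0)
  | zw2 {xd xf e q k} : k < nB → TPOTrans Dd Df (.Z xd xf e) (.er e) q →
      CTrans Dd Df nB (.Z xd xf e, k) (.er e) (q, k + 1)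
  | wy {xd xf a e q k} : TPOTrans Dd Df (.W xd xf a) (.ev e) q →
      CTrans Dd Df nB (.W xd xf a, k) (.ev e) (q, k)

/-! ### Paths within a state set, supervisor synthesis and AES pruning -/

/-- paths that stay inside a set of states `X` -/
inductive PathIn {S E : Type*} (step : S → E → S → Prop) (X : Set S) : S → List E → S → Prop
  | nil {p} : p ∈ X → PathIn step X p [] p
  | cons {p q r e s} : p ∈ X → step p e q → PathIn step X q s r →
      PathIn step X p (e :: s) r

/-- `X` is controllable (closed under uncontrollable transitions) and
nonblocking (every state of `X` reaches a marked state within `X`) -/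
def GoodSup {S E : Type*} (step : S → E → S → Prop) (marked : Set S) (unc : Set E)
    (X : Set S) : Prop :=
  (∀ p ∈ X, ∃ s q, PathIn step X p s q ∧ q ∈ marked) ∧
  (∀ p ∈ X, ∀ e ∈ unc, ∀ q, step p e q → q ∈ X)

/-- the state set of the supremal controllable and nonblocking subautomaton -/
def supCNset {S E : Type*} (step : S → E → S → Prop) (marked : Set S) (unc : Set E) :
    Set S :=
  ⋃₀ {X | GoodSup step marked unc X}

/-- `X` survives the AES pruning process: every `Z`- or `W`-state of `X` has an
outgoing transition into `X`, and every `yz`-transition from a `Y`-state of `X`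
leads into `X` -/
def GoodAES {σ Sd Sf : Type*} (Dd : Sd → σ → Sd → Prop) (Df : Sf → σ → Sf → Prop) (nB : ℕ)
    (X : Set (TPOState σ Sd Sf × ℕ)) : Prop :=
  (∀ p ∈ X, (p.1.isZ ∨ p.1.isW) → ∃ l q, CTrans Dd Df nB p l q ∧ q ∈ X) ∧
  (∀ p ∈ X, p.1.isY → ∀ e q, CTrans Dd Df nB p (TPOLabel.ev e) q → q.1.isZ → q ∈ X)

/-- the state set of the All Edit Structure: the largest set surviving the
pruning process -/
def aesSet {σ Sd Sf : Type*} (Dd : Sd → σ → Sd → Prop) (Df : Sf → σ → Sf → Prop)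
    (nB : ℕ) : Set (TPOState σ Sd Sf × ℕ) :=
  ⋃₀ {X | GoodAES Dd Df nB X}

/-! ### Runs of the AES with edit projection and generated string -/

/-- `ARun Dd Df nB X p pe l q`: a run of the (constrained, pruned to `X`) TPO
from `p` to `q` whose edit projection is `pe` and whose generated string is `l` -/
inductive ARun {σ Sd Sf : Type*} (Dd : Sd → σ → Sd → Prop) (Df : Sf → σ → Sf → Prop)
    (nB : ℕ) (X : Set (TPOState σ Sd Sf × ℕ)) :
    TPOState σ Sd Sf × ℕ → List σ → List σ → TPOState σ Sd Sf × ℕ → Prop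
  | nil {p} : p ∈ X → ARun Dd Df nB X p [] [] p
  | yz {xd xf e k q pe l r} : (TPOState.Y xd xf, k) ∈ X →
      TPOTrans Dd Df (.Y xd xf) (.ev e) q →
      ARun Dd Df nB X (q, k) pe l r →
      ARun Dd Df nB X (TPOState.Y xd xf, k) (e :: pe) l r
  | zz {xd xf e θ k q pe l r} : (TPOState.Z xd xf e, k) ∈ X →
      TPOTrans Dd Df (.Z xd xf e) (.ev θ) q →
      ARun Dd Df nB X (q, 0) pe l r →
      ARun Dd Df nB X (TPOState.Z xd xf e, k) pe (θ :: l) r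
  | zw1 {xd xf e k q pe l r} : (TPOState.Z xd xf e, k) ∈ X →
      TPOTrans Dd Df (.Z xd xf e) .eps q →
      ARun Dd Df nB X (q, 0) pe l r →
      ARun Dd Df nB X (TPOState.Z xd xf e, k) pe l r
  | zw2 {xd xf e k q pe l r} : (TPOState.Z xd xf e, k) ∈ X → k < nB →
      TPOTrans Dd Df (.Z xd xf e) (.er e) q →
      ARun Dd Df nB X (q, k + 1) pe l r →
      ARun Dd Df nB X (TPOState.Z xd xf e, k) pe l r
  | wy1 {xd xf e k q pe l r} : (TPOState.W xd xf (Sum.inl e), k) ∈ X →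
      TPOTrans Dd Df (.W xd xf (Sum.inl e)) (.ev e) q →
      ARun Dd Df nB X (q, k) pe l r →
      ARun Dd Df nB X (TPOState.W xd xf (Sum.inl e), k) pe (e :: l) r
  | wy2 {xd xf e k q pe l r} : (TPOState.W xd xf (Sum.inr e), k) ∈ X →
      TPOTrans Dd Df (.W xd xf (Sum.inr e)) (.ev e) q →
      ARun Dd Df nB X (q, k) pe l r →
      ARun Dd Df nB X (TPOState.W xd xf (Sum.inr e), k) pe l r

/-- edit projection of a string of tagged events: the untagged system events -/
def peOfT {σ : Type*} : List (TEv σ) → List σ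
  | [] => []
  | TEv.yz a :: s => a :: peOfT s
  | _ :: s => peOfT s

/-- generated (edited) string of a string of tagged events: inserted events and
executed non-erased events -/
def lOfT {σ : Type*} : List (TEv σ) → List σ
  | [] => []
  | TEv.ins a _ :: s => a :: lOfT s
  | TEv.wy a _ :: s => a :: lOfT s
  | _ :: s => lOfT s

/-! ### Edit functions -/

/-- a deterministic edit function: for history `s` and next event `a` it inserts
`ins s a` and erases `a` iff `er s a` -/
structure EditFn (σ : Type*) where
  ins : List σ → σ → List σ
  er : List σ → σ → Bool

namespace EditFn

variable {σ : Type*}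

/-- output of the edit function on event `a` after history `s` -/
def out (f : EditFn σ) (s : List σ) (a : σ) : List σ :=
  f.ins s a ++ (if f.er s a then [] else [a])

def hatAux (f : EditFn σ) : List σ → List σ → List σ
  | _, [] => []
  | pre, a :: s => f.out pre a ++ f.hatAux (pre ++ [a]) s

/-- the string-based edit function `f̂` -/
def hat (f : EditFn σ) (s : List σ) : List σ := f.hatAux [] s

-- number of consecutive erasures after processing event `a` with history
-- `pre`, given `c` consecutive erasures so far
open Classical in
noncomputable def nextCount (f : EditFn σ) (pre : List σ) (a : σ) (c : ℕ) : ℕ :=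
  if f.er pre a then (if f.ins pre a = [] then c + 1 else 1) else 0

/-- along the string, the number of consecutive erasures never exceeds `nB` -/
noncomputable def okFrom (f : EditFn σ) (nB : ℕ) : List σ → ℕ → List σ → Prop
  | _, _, [] => True
  | pre, c, a :: s =>
      f.nextCount pre a c ≤ nB ∧ f.okFrom nB (pre ++ [a]) (f.nextCount pre a c) s

end EditFn

section Aux

variable {σ Q : Type*}

theorem NFAt.obsReach_trans' {G : NFAt σ Q} {x y z : Q} {s t : List σ}
    (h1 : G.obsReach x s y) (h2 : G.obsReach y t z) : G.obsReach x (s ++ t) z := by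
  induction h1 with
  | refl => exact h2
  | tau h _ ih => exact .tau h (ih h2)
  | obs h _ ih => exact .obs h (ih h2)

theorem NFAt.obsReach_cons_decomp {G : NFAt σ Q} {x y : Q} {a : σ} {s l : List σ}
    (h : G.obsReach x l y) (hl : l = a :: s) :
    ∃ x' z, G.obsReach x [] x' ∧ G.trans x' (some a) z ∧ G.obsReach z s y := by
  induction h with
  | refl => simp at hl
  | tau h _ ih =>
    obtain ⟨x', z, h1, h2, h3⟩ := ih hl
    exact ⟨x', z, .tau h h1, h2, h3⟩
  | @obs x y z a' s' h h' _ =>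
    cases hl
    exact ⟨x, y, .refl x, h, h'⟩

theorem obsReach_lift (G : NFAt σ Q) (st : Setoid Q) {x y : Q} {l : List σ}
    (h : G.obsReach x l y) :
    (quotNFA G st).obsReach (Quotient.mk st x) l (Quotient.mk st y) := by
  induction h with
  | refl => exact .refl _
  | tau h _ ih => exact .tau ⟨_, _, rfl, rfl, h⟩ ih
  | obs h _ ih => exact .obs ⟨_, _, rfl, rfl, h⟩ ih

theorem obsReach_lower (G : NFAt σ Q) (QS : Set Q) (r : Q → Q → Prop)
    (hr : OpaqueObsEquiv G QS r) {c c' : Quotient (⟨r, hr.1⟩ : Setoid Q)} {l : List σ}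
    (h : (quotNFA G ⟨r, hr.1⟩).obsReach c l c') :
    ∀ x : Q, c = Quotient.mk ⟨r, hr.1⟩ x →
      ∃ y, G.obsReach x l y ∧ c' = Quotient.mk ⟨r, hr.1⟩ y := by
  induction h with
  | refl c => exact fun x hx => ⟨x, .refl x, hx⟩
  | tau h _ ih =>
    rintro x rfl
    obtain ⟨u, v, hu, hv, huv⟩ := h
    obtain ⟨w, hw, rfl⟩ := ih v hv
    have hux : r u x := hr.1.symm (Quotient.exact hu)
    obtain ⟨y, hy, rwy⟩ := hr.2.1 u x hux _ w (.tau huv hw)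
    exact ⟨y, hy, Quotient.sound rwy⟩
  | obs h _ ih =>
    rintro x rfl
    obtain ⟨u, v, hu, hv, huv⟩ := h
    obtain ⟨w, hw, rfl⟩ := ih v hv
    have hux : r u x := hr.1.symm (Quotient.exact hu)
    obtain ⟨y, hy, rwy⟩ := hr.2.1 u x hux _ w (.obs huv hw)
    exact ⟨y, hy, Quotient.sound rwy⟩

end Aux

/-- If `G̃` is the quotient of `G` by an opaque observation
equivalence, then `det(G) ≈ det(G̃)` and `det_d(G) ≈ det_d(G̃)`. -/
theorem observer_and_desired_bisimilar_of_opaque_obs_equiv {σ Q : Type*}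
    (G : NFAt σ Q) (QS : Set Q) (r : Q → Q → Prop) (hr : OpaqueObsEquiv G QS r) :
    Bisimilar (observerDA G) (observerDA (quotNFA G ⟨r, hr.1⟩)) ∧
    Bisimilar (desiredDA G QS)
      (desiredDA (quotNFA G ⟨r, hr.1⟩) (quotSecret ⟨r, hr.1⟩ QS)) := by
  set st : Setoid Q := ⟨r, hr.1⟩ with hst
  let Gq := quotNFA G st
  let mk : Q → Quotient st := Quotient.mk st
  -- τ-closedness
  let TC : Set Q → Prop := fun X => ∀ x ∈ X, ∀ y, G.obsReach x [] y → y ∈ X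
  have tc_init : TC G.detInit := by
    rintro x ⟨x0, hx0, hx0x⟩ y hxy
    exact ⟨x0, hx0, NFAt.obsReach_trans' hx0x hxy⟩
  have tc_step : ∀ (X : Set Q) (a : σ), TC (G.obsStep X a) := by
    rintro X a x ⟨x0, hx0, z, htr, hz⟩ y hxy
    exact ⟨x0, hx0, z, htr, NFAt.obsReach_trans' hz hxy⟩
  -- initial states correspond
  have init_eq : mk '' G.detInit = Gq.detInit := by
    ext c
    constructor
    · rintro ⟨y, ⟨x, hx, hxy⟩, rfl⟩
      exact ⟨mk x, ⟨x, hx, rfl⟩, obsReach_lift G st hxy⟩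
    · rintro ⟨c0, ⟨x, hx, rfl⟩, hc⟩
      obtain ⟨y, hy, rfl⟩ := obsReach_lower G QS r hr hc x rfl
      exact ⟨y, ⟨x, hx, hy⟩, rfl⟩
  -- step sets correspond
  have step_eq : ∀ (X : Set Q) (a : σ), TC X →
      mk '' (G.obsStep X a) = Gq.obsStep (mk '' X) a := by
    intro X a hTC
    ext c
    constructor
    · rintro ⟨y, ⟨x, hx, z, htr, hz⟩, rfl⟩
      exact ⟨mk x, ⟨x, hx, rfl⟩, mk z, ⟨x, z, rfl, rfl, htr⟩, obsReach_lift G st hz⟩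
    · rintro ⟨c0, ⟨x, hx, rfl⟩, c1, ⟨u, v, hu, hv, huv⟩, hc⟩
      subst hv
      obtain ⟨w, hw, rfl⟩ := obsReach_lower G QS r hr hc v rfl
      have hux : r u x := hr.1.symm (Quotient.exact hu)
      obtain ⟨w', hw', rww'⟩ := hr.2.1 u x hux [a] w (.obs huv hw)
      obtain ⟨x', z, h1, h2, h3⟩ := NFAt.obsReach_cons_decomp hw' rfl
      exact ⟨w', ⟨x', hTC x hx x' h1, z, h2, h3⟩, (Quotient.sound rww').symm⟩
  -- secrets correspond
  have sec_iff : ∀ X : Set Q, (X ⊆ QS ↔ mk '' X ⊆ quotSecret st QS) := by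
    intro X
    constructor
    · rintro h c ⟨x, hx, rfl⟩
      exact ⟨x, h hx, rfl⟩
    · intro h x hx
      obtain ⟨x', hx', hxx'⟩ := h ⟨x, hx, rfl⟩
      exact ((hr.2.2 x x' (Quotient.exact hxx')).mpr hx')
  constructor
  · -- observers bisimilar
    refine ⟨fun X c => c = mk '' X ∧ TC X, ⟨init_eq.symm, tc_init⟩, ?_⟩
    rintro X c ⟨rfl, hTC⟩
    constructor
    · rintro a Y ⟨rfl, hne⟩
      refine ⟨Gq.obsStep (mk '' X) a, ⟨rfl, ?_⟩, (step_eq X a hTC).symm, tc_step X a⟩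
      rw [← step_eq X a hTC]
      exact hne.image mk
    · rintro a c' ⟨rfl, hne⟩
      refine ⟨G.obsStep X a, ⟨rfl, ?_⟩, (step_eq X a hTC).symm, tc_step X a⟩
      rw [← step_eq X a hTC] at hne
      obtain ⟨c, y, hy, -⟩ := hne
      exact ⟨y, hy⟩
  · -- desired observers bisimilar
    refine ⟨fun X c => c = mk '' X ∧ TC X, ⟨init_eq.symm, tc_init⟩, ?_⟩
    rintro X c ⟨rfl, hTC⟩
    constructor
    · rintro a Y ⟨rfl, hne, hXs, hYs⟩
      refine ⟨Gq.obsStep (mk '' X) a, ⟨rfl, ?_, ?_, ?_⟩,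
        (step_eq X a hTC).symm, tc_step X a⟩
      · rw [← step_eq X a hTC]
        exact hne.image mk
      · exact fun h => hXs ((sec_iff X).mpr h)
      · rw [← step_eq X a hTC]
        exact fun h => hYs ((sec_iff _).mpr h)
    · rintro a c' ⟨rfl, hne, hXs, hYs⟩
      refine ⟨G.obsStep X a, ⟨rfl, ?_, ?_, ?_⟩, (step_eq X a hTC).symm, tc_step X a⟩
      · rw [← step_eq X a hTC] at hne
        obtain ⟨c, y, hy, -⟩ := hne
        exact ⟨y, hy⟩
      · exact fun h => hXs ((sec_iff X).mp h)
      · rw [← step_eq X a hTC] at hYs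
        exact fun h => hYs ((sec_iff _).mp h)
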